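/- arXiv:1505.00602 — 4 statements merged into one kernel-verified Lean document; each statement's English description precedes it below -/
import Mathlib

section
/- For every y ≥ 1, the modular j-function satisfies j(iy) ≤ e^{2πy} + 1193. -/
open Real Complex

/-- The nome `q = e^{2πiτ}`. -/
noncomputable def nome (τ : ℂ) : ℂ := Complex.exp (2 * Real.pi * Complex.I * τ)

/-- The modular discriminant `Δ(τ) = (2π)^{12} q ∏_{n≥1} (1-q^n)^{24}`. -/
noncomputable def modularDelta (τ : ℂ) : ℂ :=
  (2 * Real.pi) ^ 12 * nome τ * ∏' n : ℕ, (1 - nome τ ^ (n + 1)) ^ 24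

/-- The normalized Eisenstein series `E₄(τ) = 1 + 240 ∑_{n≥1} σ₃(n) q^n`. -/
noncomputable def eisensteinE4 (τ : ℂ) : ℂ :=
  1 + 240 * ∑' n : ℕ, (ArithmeticFunction.sigma 3 (n + 1) : ℂ) * nome τ ^ (n + 1)

/-- The modular `j`-function, with Fourier expansion `j(τ) = 1/q + 744 + ⋯`. -/
noncomputable def modularJ (τ : ℂ) : ℂ :=
  (2 * Real.pi) ^ 12 * eisensteinE4 τ ^ 3 / modularDelta τ

/-!
Let `t = e^{-2πy} ≤ e^{-2π} < 0.0018678` be the nome at `iy`. Then `j(iy) = E³ / (t P)` with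
`E = 1 + 240 ∑ σ₃(n) tⁿ` and `P = ∏ (1 - tⁿ)²⁴`, so the claim is `E³ ≤ (1 + 1193 t) P`.
From `σ₃(n) ≤ n⁴` we get `E ≤ 1 + 240 (t + 9t² + 28t³ + 258t⁴)`. Truncating the binomial expansion
of `(1 - t)²⁴`, Bernoulli's inequality for `(1 - t²)²⁴` and the Weierstrass inequality
`∏ (1 - aₙ) ≥ 1 - ∑ aₙ` for the remaining factors give
`P ≥ (1 - 24t + 276t² - 2024t³)(1 - 24t²)(1 - 25t³)`. The resulting polynomial inequality holds on
`[0, 0.0018678]`: the difference of its two sides, divided by `t`, has constant term `449` and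
otherwise only negative coefficients, and it is still positive at `t = 0.0018678`.
-/

open ArithmeticFunction
open scoped ArithmeticFunction.sigma

lemma Complex.ofReal_tprod {ι : Type*} (f : ι → ℝ) : ((∏' i, f i : ℝ) : ℂ) = ∏' i, (f i : ℂ) :=
  Complex.isUniformEmbedding_ofReal.isClosedEmbedding.map_tprod (g := Complex.ofRealHom) f

lemma one_sub_tsum_le_tprod {ι : Type*} {f g : ι → ℝ} (hf : Summable f) (hg : Multipliable g)
    (hf0 : ∀ i, 0 ≤ f i) (hf1 : ∀ i, f i ≤ 1) (hfg : ∀ i, 1 - f i ≤ g i) :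
    1 - ∑' i, f i ≤ ∏' i, g i := by
  classical
  refine le_hasProd_of_le_prod hg.hasProd fun s ↦ ?_
  have weierstrass : 1 - ∑ i ∈ s, f i ≤ ∏ i ∈ s, (1 - f i) := by
    induction s using Finset.induction_on with
    | empty => simp
    | insert a s ha ih =>
      rw [Finset.sum_insert ha, Finset.prod_insert ha]
      have hprod : ∏ i ∈ s, (1 - f i) ≤ 1 :=
        Finset.prod_le_one (fun i _ ↦ sub_nonneg.2 (hf1 i)) fun i _ ↦ by linarith [hf0 i]
      nlinarith [hf0 a, hf1 a, Finset.sum_nonneg fun i (_ : i ∈ s) ↦ hf0 i]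
  calc 1 - ∑' i, f i ≤ 1 - ∑ i ∈ s, f i := by linarith [hf.sum_le_tsum s fun i _ ↦ hf0 i]
    _ ≤ ∏ i ∈ s, (1 - f i) := weierstrass
    _ ≤ ∏ i ∈ s, g i :=
      Finset.prod_le_prod (fun i _ ↦ sub_nonneg.2 (hf1 i)) fun i _ ↦ hfg i

lemma one_sub_cubic_le_one_sub_pow {t : ℝ} (ht1 : t ≤ 1) (n : ℕ) :
    1 - n * t + n.choose 2 * t ^ 2 - n.choose 3 * t ^ 3 ≤ (1 - t) ^ n := by
  induction n with
  | zero => simp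
  | succ n ih =>
    rw [Nat.choose_succ_succ' n 1, Nat.choose_succ_succ' n 2, Nat.choose_one_right,
      pow_succ (1 - t)]
    push_cast
    have h3 : 0 ≤ (n.choose 3 : ℝ) * t ^ 4 := by positivity
    nlinarith [mul_le_mul_of_nonneg_right ih (sub_nonneg.2 ht1)]

lemma multipliable_one_sub_pow_pow {t : ℝ} (ht0 : 0 ≤ t) (ht1 : t < 1) (k m : ℕ) :
    Multipliable fun n : ℕ ↦ (1 - t ^ (n + m)) ^ k := by
  have hsum : Summable fun n : ℕ ↦ -t ^ (n + m) :=
    ((summable_nat_add_iff m).2 (summable_geometric_of_lt_one ht0 ht1)).neg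
  simpa [sub_eq_add_neg] using (Real.multipliable_one_add_of_summable hsum).pow k

lemma one_sub_le_tprod_one_sub_pow_pow {t : ℝ} (ht0 : 0 ≤ t) (ht1 : t < 1) {k m : ℕ}
    (hkm : k * t ^ m ≤ 1) :
    1 - k * t ^ m / (1 - t) ≤ ∏' n : ℕ, (1 - t ^ (n + m)) ^ k := by
  have hpow : ∀ n, k * t ^ (n + m) ≤ k * t ^ m := fun n ↦
    mul_le_mul_of_nonneg_left (by simpa using pow_le_pow_of_le_one ht0 ht1.le (m.le_add_left n))
      k.cast_nonneg
  have hgeom : HasSum (fun n : ℕ ↦ k * t ^ (n + m)) (k * t ^ m / (1 - t)) := by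
    simpa [pow_add, mul_comm, mul_left_comm, mul_assoc, div_eq_mul_inv] using
      ((hasSum_geometric_of_lt_one ht0 ht1).mul_left (k * t ^ m))
  rw [← hgeom.tsum_eq]
  refine one_sub_tsum_le_tprod hgeom.summable (multipliable_one_sub_pow_pow ht0 ht1 k m)
    (fun n ↦ by positivity) (fun n ↦ (hpow n).trans hkm) fun n ↦ ?_
  have hbernoulli :=
    one_add_mul_le_pow (a := -t ^ (n + m)) (by linarith [pow_le_one₀ (n := n + m) ht0 ht1.le]) k
  simpa [sub_eq_add_neg] using hbernoulli

lemma summable_sigma_mul_pow (k : ℕ) {t : ℝ} (ht0 : 0 ≤ t) (ht1 : t < 1) :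
    Summable fun n : ℕ ↦ (σ k n : ℝ) * t ^ n := by
  have hgeom := summable_pow_mul_geometric_of_norm_lt_one (k + 1) (by rwa [norm_of_nonneg ht0])
  refine hgeom.of_nonneg_of_le (fun n ↦ by positivity) fun n ↦ ?_
  gcongr
  exact_mod_cast sigma_le_pow_succ k n

lemma add_four_pow_four_le (n : ℕ) : ((n : ℝ) + 4) ^ 4 ≤ 256 * 4 ^ n := by
  induction n with
  | zero => norm_num
  | succ n ih =>
    push_cast
    rw [pow_succ (4 : ℝ)]
    have hn : (0 : ℝ) ≤ n := n.cast_nonneg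
    nlinarith [pow_nonneg hn 3, pow_nonneg hn 4]

lemma nome_I_mul (y : ℝ) : nome (I * y) = (Real.exp (-(2 * π * y)) : ℝ) := by
  rw [nome, Complex.ofReal_exp]
  congr 1
  push_cast
  linear_combination (2 * π * y : ℂ) * I_mul_I

section RealNome

variable {τ : ℂ} {t : ℝ}

lemma eisensteinE4_eq_ofReal (h : nome τ = t) :
    eisensteinE4 τ = (1 + 240 * ∑' n : ℕ, (σ 3 (n + 1) : ℝ) * t ^ (n + 1) : ℝ) := by
  simp [eisensteinE4, h, Complex.ofReal_tsum]

lemma modularDelta_eq_ofReal (h : nome τ = t) :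
    modularDelta τ = ((2 * π) ^ 12 * t * ∏' n : ℕ, (1 - t ^ (n + 1)) ^ 24 : ℝ) := by
  simp [modularDelta, h, Complex.ofReal_tprod]

lemma modularJ_eq_ofReal (h : nome τ = t) :
    modularJ τ = ((1 + 240 * ∑' n : ℕ, (σ 3 (n + 1) : ℝ) * t ^ (n + 1)) ^ 3 /
      (t * ∏' n : ℕ, (1 - t ^ (n + 1)) ^ 24) : ℝ) := by
  have hπ : (2 * π : ℂ) ^ 12 ≠ 0 := by exact_mod_cast (by positivity : (2 * π) ^ 12 ≠ 0)
  rw [modularJ, eisensteinE4_eq_ofReal h, modularDelta_eq_ofReal h]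
  push_cast
  rw [mul_assoc, mul_div_mul_left _ _ hπ]

end RealNome

lemma le_tprod_one_sub_pow_pow_24 {t : ℝ} (ht0 : 0 ≤ t) (ht : t ≤ 1 / 25) :
    (1 - 24 * t + 276 * t ^ 2 - 2024 * t ^ 3) * (1 - 24 * t ^ 2) * (1 - 25 * t ^ 3)
      ≤ ∏' n : ℕ, (1 - t ^ (n + 1)) ^ 24 := by
  have ht1 : t < 1 := by linarith
  have ht3 : t ^ 3 ≤ t := pow_le_of_le_one ht0 ht1.le (by norm_num)
  have ht2 : t ^ 2 ≤ t := pow_le_of_le_one ht0 ht1.le (by norm_num)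
  have hsplit : ∏' n : ℕ, (1 - t ^ (n + 1)) ^ 24
      = (1 - t) ^ 24 * (1 - t ^ 2) ^ 24 * ∏' n : ℕ, (1 - t ^ (n + 3)) ^ 24 := by
    have htail : Multipliable fun n : ℕ ↦ (1 - t ^ (n + 2 + 1)) ^ 24 := by
      simpa only [add_assoc] using multipliable_one_sub_pow_pow ht0 ht1 24 3
    rw [← Multipliable.prod_mul_tprod_nat_mul' (f := fun n ↦ (1 - t ^ (n + 1)) ^ 24) htail]
    simp [Finset.prod_range_succ, add_assoc]
  have hcubic : 1 - 24 * t + 276 * t ^ 2 - 2024 * t ^ 3 ≤ (1 - t) ^ 24 := by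
    have h := one_sub_cubic_le_one_sub_pow ht1.le 24
    rw [show Nat.choose 24 2 = 276 by decide, show Nat.choose 24 3 = 2024 by decide] at h
    exact_mod_cast h
  have hbernoulli : 1 - 24 * t ^ 2 ≤ (1 - t ^ 2) ^ 24 := by
    simpa [sub_eq_add_neg] using one_add_mul_le_pow (a := -t ^ 2) (by linarith) 24
  have htail : 1 - 25 * t ^ 3 ≤ ∏' n : ℕ, (1 - t ^ (n + 3)) ^ 24 := by
    refine le_trans ?_ (one_sub_le_tprod_one_sub_pow_pow ht0 ht1 (by push_cast; linarith))
    rw [sub_le_sub_iff_left, div_le_iff₀ (by linarith)]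
    push_cast
    nlinarith [mul_nonneg (pow_nonneg ht0 3) (by linarith : 0 ≤ 1 - 25 * t)]
  rw [hsplit]
  gcongr <;> linarith

lemma tsum_sigma_three_mul_pow_le {t : ℝ} (ht0 : 0 ≤ t) (ht : t ≤ 1 / 516) :
    ∑' n : ℕ, (σ 3 (n + 1) : ℝ) * t ^ (n + 1) ≤ t + 9 * t ^ 2 + 28 * t ^ 3 + 258 * t ^ 4 := by
  have h4t : 4 * t < 1 := by linarith
  have hsum : Summable fun n : ℕ ↦ (σ 3 (n + 1) : ℝ) * t ^ (n + 1) :=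
    (summable_nat_add_iff 1).2 (summable_sigma_mul_pow 3 ht0 (by linarith))
  have hhead : ∑ i ∈ Finset.range 3, (σ 3 (i + 1) : ℝ) * t ^ (i + 1)
      = t + 9 * t ^ 2 + 28 * t ^ 3 := by
    simp [Finset.sum_range_succ, show σ 3 2 = 9 by decide, show σ 3 3 = 28 by decide]
  have htail : ∑' n : ℕ, (σ 3 (n + 3 + 1) : ℝ) * t ^ (n + 3 + 1) ≤ 256 * t ^ 4 / (1 - 4 * t) := by
    have hgeom : HasSum (fun n : ℕ ↦ 256 * t ^ 4 * (4 * t) ^ n) (256 * t ^ 4 / (1 - 4 * t)) := by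
      simpa [div_eq_mul_inv] using
        (hasSum_geometric_of_lt_one (by positivity) h4t).mul_left (256 * t ^ 4)
    have htail_sum : Summable fun n : ℕ ↦ (σ 3 (n + 3 + 1) : ℝ) * t ^ (n + 3 + 1) :=
      (summable_nat_add_iff 3).2 hsum
    refine hasSum_le (fun n ↦ ?_) htail_sum.hasSum hgeom
    calc (σ 3 (n + 3 + 1) : ℝ) * t ^ (n + 3 + 1) ≤ ((n : ℝ) + 4) ^ 4 * t ^ (n + 4) := by
          gcongr
          exact_mod_cast (sigma_le_pow_succ 3 (n + 4)).trans_eq (by push_cast; ring)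
      _ ≤ 256 * 4 ^ n * t ^ (n + 4) := by gcongr; exact add_four_pow_four_le n
      _ = 256 * t ^ 4 * (4 * t) ^ n := by ring
  have htail_le : 256 * t ^ 4 / (1 - 4 * t) ≤ 258 * t ^ 4 := by
    rw [div_le_iff₀ (by linarith)]
    nlinarith [pow_nonneg ht0 4]
  rw [← hsum.sum_add_tsum_nat_add 3, hhead]
  linarith

lemma truncated_eisensteinE4_cube_le {t : ℝ} (ht0 : 0 ≤ t) (ht : t ≤ 0.0018678) :
    (1 + 240 * (t + 9 * t ^ 2 + 28 * t ^ 3 + 258 * t ^ 4)) ^ 3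
      ≤ (1 + 1193 * t) *
        ((1 - 24 * t + 276 * t ^ 2 - 2024 * t ^ 3) * (1 - 24 * t ^ 2) * (1 - 25 * t ^ 3)) := by
  have h : ∀ k : ℕ, t ^ (k + 1) * t ≤ 0.0018678 ^ (k + 1) * t := fun k ↦ by gcongr
  linarith [h 0, h 1, h 2, h 3, h 4, h 5, h 6, h 7, h 8, h 9, h 10]

lemma exp_neg_two_pi_le : rexp (-(2 * π)) ≤ 0.0018678 := by
  have hπ : 6.283184 ≤ 2 * π := by linarith [pi_gt_d6]
  have htaylor : ∑ i ∈ Finset.range 25, (6.283184 : ℝ) ^ i / i.factorial ≤ rexp 6.283184 :=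
    sum_le_exp_of_nonneg (by norm_num) 25
  norm_num [Finset.sum_range_succ, Nat.factorial] at htaylor
  rw [Real.exp_neg, inv_le_comm₀ (exp_pos _) (by norm_num)]
  exact (by linarith : (0.0018678 : ℝ)⁻¹ ≤ rexp 6.283184).trans (exp_le_exp.2 hπ)

/-- For `y ≥ 1` we have `j(iy) ≤ e^{2πy} + 1193` (note `j(iy)` is real). -/
theorem modularJ_le {y : ℝ} (hy : 1 ≤ y) :
    (modularJ (Complex.I * y)).re ≤ Real.exp (2 * Real.pi * y) + 1193 := by
  rw [modularJ_eq_ofReal (nome_I_mul y), Complex.ofReal_re]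
  set t := Real.exp (-(2 * π * y)) with ht_def
  set S := ∑' n : ℕ, (σ 3 (n + 1) : ℝ) * t ^ (n + 1)
  set P := ∏' n : ℕ, (1 - t ^ (n + 1)) ^ 24
  have ht0 : 0 < t := Real.exp_pos _
  have ht : t ≤ 0.0018678 :=
    (Real.exp_le_exp.2 (by nlinarith [pi_pos])).trans exp_neg_two_pi_le
  have hS0 : 0 ≤ S := tsum_nonneg fun n ↦ by positivity
  have key : (1 + 240 * S) ^ 3 ≤ (1 + 1193 * t) * P :=
    calc (1 + 240 * S) ^ 3 ≤ (1 + 240 * (t + 9 * t ^ 2 + 28 * t ^ 3 + 258 * t ^ 4)) ^ 3 := by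
          gcongr
          exact tsum_sigma_three_mul_pow_le ht0.le (by linarith)
      _ ≤ (1 + 1193 * t) *
            ((1 - 24 * t + 276 * t ^ 2 - 2024 * t ^ 3) * (1 - 24 * t ^ 2) * (1 - 25 * t ^ 3)) :=
          truncated_eisensteinE4_cube_le ht0.le ht
      _ ≤ (1 + 1193 * t) * P := by
          gcongr
          exact le_tprod_one_sub_pow_pow_24 ht0.le (by linarith)
  have hP0 : 0 < P :=
    pos_of_mul_pos_right ((by positivity : (0 : ℝ) < _).trans_le key) (by positivity)
  have hexp : Real.exp (2 * π * y) * t = 1 := by rw [ht_def, ← Real.exp_add]; simp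
  rw [div_le_iff₀ (mul_pos ht0 hP0)]
  linear_combination key - P * hexp
end

section
/- For every τ in the closed fundamental domain F̄, we have −log|Δ(τ)| > log max{1, |j(τ)|} − 29.25. -/
open Real Complex

/-- The closed fundamental domain for `SL₂(ℤ)` acting on the upper half-plane. -/
def closedFD : Set ℂ :=
  {τ : ℂ | 0 < τ.im ∧ -(1 / 2) ≤ τ.re ∧ τ.re ≤ 1 / 2 ∧ 1 ≤ ‖τ‖}

/-! On `F̄` we have `Im τ ≥ 4/5`, so the nome satisfies `|q| ≤ e⁻⁵ < 1/100`. For such `q` the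
`q`-expansions give `|E₄| ≤ 4` (via `σ₃(n + 1) ≤ (n + 1)⁴ ≤ 16ⁿ`) and
`|∏ (1 - qⁿ)²⁴| ≤ exp (24|q| / (1 - |q|)) ≤ 3`, so both `|Δ|` and `|(2π)¹² E₄³| = |j Δ|` are below
`(2π)¹² · 64 < e^29.25`. Hence `max 1 |j| · |Δ| = max |Δ| |j Δ| < e^29.25`. -/

theorem norm_tprod_le_exp_of_hasSum {ι R : Type*} [NormedCommRing R] [NormOneClass R]
    {f : ι → R} {g : ι → ℝ} {a : ℝ} (hg : HasSum g a) (hg0 : 0 ≤ g)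
    (hfg : ∀ i, ‖f i‖ ≤ Real.exp (g i)) : ‖∏' i, f i‖ ≤ Real.exp a := by
  by_cases hf : Multipliable f
  · refine le_of_tendsto' (Filter.Tendsto.norm hf.hasProd) fun s => ?_
    calc ‖∏ i ∈ s, f i‖ ≤ ∏ i ∈ s, ‖f i‖ := Finset.norm_prod_le s f
      _ ≤ ∏ i ∈ s, Real.exp (g i) := Finset.prod_le_prod (fun i _ => norm_nonneg _) fun i _ => hfg i
      _ = Real.exp (∑ i ∈ s, g i) := (Real.exp_sum s g).symm
      _ ≤ Real.exp a := Real.exp_le_exp.mpr (sum_le_hasSum s (fun i _ => hg0 i) hg)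
  · rw [tprod_eq_one_of_not_multipliable hf, norm_one]
    exact Real.one_le_exp (hg.nonneg hg0)

theorem norm_tprod_one_sub_pow_succ_pow_le {q : ℂ} {r : ℝ} (k : ℕ) (hq : ‖q‖ ≤ r) (hr : r < 1) :
    ‖∏' n : ℕ, (1 - q ^ (n + 1)) ^ k‖ ≤ Real.exp (k * r / (1 - r)) := by
  have hr0 : 0 ≤ r := (norm_nonneg q).trans hq
  have hg : HasSum (fun n : ℕ => k * r * r ^ n) (k * r / (1 - r)) := by
    simpa [div_eq_mul_inv] using (hasSum_geometric_of_lt_one hr0 hr).mul_left (k * r)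
  refine norm_tprod_le_exp_of_hasSum hg (fun n => by positivity) fun n => ?_
  calc ‖(1 - q ^ (n + 1)) ^ k‖ ≤ (1 + r ^ (n + 1)) ^ k := by
        rw [norm_pow]
        gcongr
        exact (norm_sub_le _ _).trans (by rw [norm_one, norm_pow]; gcongr)
    _ ≤ Real.exp (r ^ (n + 1)) ^ k := by
        gcongr
        linarith [Real.add_one_le_exp (r ^ (n + 1))]
    _ = Real.exp (k * r * r ^ n) := by rw [← Real.exp_nat_mul]; ring_nf

theorem sigma_three_succ_le_sixteen_pow (n : ℕ) :
    (ArithmeticFunction.sigma 3 (n + 1) : ℝ) ≤ 16 ^ n := by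
  have h : ArithmeticFunction.sigma 3 (n + 1) ≤ 16 ^ n :=
    calc ArithmeticFunction.sigma 3 (n + 1) ≤ (n + 1) ^ 4 :=
          ArithmeticFunction.sigma_le_pow_succ 3 _
      _ ≤ (2 ^ n) ^ 4 := Nat.pow_le_pow_left (Nat.lt_two_pow_self) 4
      _ = 16 ^ n := by rw [← pow_mul, mul_comm, pow_mul]; norm_num
  exact_mod_cast h

theorem norm_tsum_sigma_three_mul_pow_succ_le {q : ℂ} {r : ℝ} (hq : ‖q‖ ≤ r) (hr : r < 1 / 16) :
    ‖∑' n : ℕ, (ArithmeticFunction.sigma 3 (n + 1) : ℂ) * q ^ (n + 1)‖ ≤ r / (1 - 16 * r) := by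
  have hr0 : 0 ≤ r := (norm_nonneg q).trans hq
  have hg : HasSum (fun n : ℕ => r * (16 * r) ^ n) (r / (1 - 16 * r)) := by
    simpa [div_eq_mul_inv] using
      (hasSum_geometric_of_lt_one (by positivity) (by linarith)).mul_left r
  refine tsum_of_norm_bounded hg fun n => ?_
  calc ‖(ArithmeticFunction.sigma 3 (n + 1) : ℂ) * q ^ (n + 1)‖
      ≤ 16 ^ n * r ^ (n + 1) := by
        rw [norm_mul, norm_pow, Complex.norm_natCast]
        gcongr
        exact sigma_three_succ_le_sixteen_pow n
    _ = r * (16 * r) ^ n := by ring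

theorem norm_eisensteinE4_le {τ : ℂ} {r : ℝ} (hq : ‖nome τ‖ ≤ r) (hr : r < 1 / 16) :
    ‖eisensteinE4 τ‖ ≤ 1 + 240 * (r / (1 - 16 * r)) := by
  calc ‖eisensteinE4 τ‖ ≤ ‖(1 : ℂ)‖ + ‖(240 : ℂ)‖ * _ :=
        (norm_add_le _ _).trans_eq (by rw [norm_mul])
    _ ≤ 1 + 240 * (r / (1 - 16 * r)) := by
        rw [norm_one, Complex.norm_ofNat]
        gcongr
        exact norm_tsum_sigma_three_mul_pow_succ_le hq hr

theorem norm_nome (τ : ℂ) : ‖nome τ‖ = Real.exp (-(2 * π * τ.im)) := by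
  simp [nome, Complex.norm_exp]

theorem four_fifths_le_im_of_mem_closedFD {τ : ℂ} (hτ : τ ∈ closedFD) : 4 / 5 ≤ τ.im := by
  obtain ⟨him, hre₁, hre₂, hnorm⟩ := hτ
  have h : 1 ≤ τ.re * τ.re + τ.im * τ.im := by
    rw [← Complex.normSq_apply, ← Complex.sq_norm]
    nlinarith
  nlinarith

theorem norm_nome_le_of_mem_closedFD {τ : ℂ} (hτ : τ ∈ closedFD) : ‖nome τ‖ ≤ 1 / 100 := by
  have him := four_fifths_le_im_of_mem_closedFD hτ
  have h5 : 5 ≤ 2 * π * τ.im := by nlinarith [Real.pi_gt_d2]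
  have h100 : 100 ≤ Real.exp 5 := by
    have h := pow_le_pow_left₀ (by norm_num) Real.exp_one_gt_d9.le 5
    rw [← Real.exp_nat_mul] at h
    norm_num at h
    linarith
  calc ‖nome τ‖ = (Real.exp (2 * π * τ.im))⁻¹ := by rw [norm_nome, Real.exp_neg]
    _ ≤ (Real.exp 5)⁻¹ := by gcongr
    _ ≤ 1 / 100 := by rw [one_div]; gcongr

theorem two_pi_pow_twelve_mul_sixtyFour_lt_exp : (2 * π) ^ 12 * 64 < Real.exp 29.25 := by
  have hπ : (2 * π) ^ 12 ≤ 6.3 ^ 12 := by gcongr; linarith [Real.pi_lt_d2]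
  have he : 2.7 ^ 29 ≤ Real.exp 29.25 := by
    calc (2.7 : ℝ) ^ 29 ≤ Real.exp 1 ^ 29 := by gcongr; linarith [Real.exp_one_gt_d9]
      _ = Real.exp 29 := by rw [← Real.exp_nat_mul]; norm_num
      _ ≤ Real.exp 29.25 := by gcongr; norm_num
  nlinarith

theorem norm_two_pi_pow_twelve : ‖(2 * (π : ℂ)) ^ 12‖ = (2 * π) ^ 12 := by
  rw [norm_pow, norm_mul, Complex.norm_ofNat, Complex.norm_real, Real.norm_of_nonneg pi_pos.le]

theorem norm_modularDelta_lt_of_mem_closedFD {τ : ℂ} (hτ : τ ∈ closedFD) :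
    ‖modularDelta τ‖ < Real.exp 29.25 := by
  have hq := norm_nome_le_of_mem_closedFD hτ
  have hprod := norm_tprod_one_sub_pow_succ_pow_le 24 hq (by norm_num)
  have he : Real.exp (24 * (1 / 100) / (1 - 1 / 100)) ≤ 3 := by
    calc _ ≤ Real.exp 1 := by gcongr; norm_num
      _ ≤ 3 := by linarith [Real.exp_one_lt_d9]
  calc ‖modularDelta τ‖ ≤ (2 * π) ^ 12 * (1 / 100) * 3 := by
        rw [modularDelta, norm_mul, norm_mul, norm_two_pi_pow_twelve]
        gcongr
        exact_mod_cast hprod.trans he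
    _ ≤ (2 * π) ^ 12 * 64 := by rw [mul_assoc]; gcongr; norm_num
    _ < Real.exp 29.25 := two_pi_pow_twelve_mul_sixtyFour_lt_exp

theorem norm_two_pi_pow_twelve_mul_eisensteinE4_pow_three_lt_of_mem_closedFD {τ : ℂ}
    (hτ : τ ∈ closedFD) : ‖(2 * (π : ℂ)) ^ 12 * eisensteinE4 τ ^ 3‖ < Real.exp 29.25 := by
  have hE := norm_eisensteinE4_le (norm_nome_le_of_mem_closedFD hτ) (by norm_num)
  calc ‖(2 * (π : ℂ)) ^ 12 * eisensteinE4 τ ^ 3‖ ≤ (2 * π) ^ 12 * 4 ^ 3 := by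
        rw [norm_mul, norm_two_pi_pow_twelve, norm_pow]
        gcongr
        linarith
    _ = (2 * π) ^ 12 * 64 := by norm_num
    _ < Real.exp 29.25 := two_pi_pow_twelve_mul_sixtyFour_lt_exp

theorem log_max_one_div_add_log_lt {x y C : ℝ} (hy0 : 0 ≤ y) (hC : 0 < C)
    (hx : x < Real.exp C) (hy : y < Real.exp C) : Real.log (max 1 (x / y)) + Real.log y < C := by
  rcases hy0.eq_or_lt with rfl | hy0
  · -- junk values `x / 0 = 0` and `log 0 = 0`
    simpa using hC
  rw [← Real.log_mul (by positivity) hy0.ne', max_mul_of_nonneg _ _ hy0.le, one_mul,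
    div_mul_cancel₀ _ hy0.ne', Real.log_lt_iff_lt_exp (by positivity)]
  exact max_lt hy hx

theorem neg_log_abs_modularDelta_gt {τ : ℂ} (hτ : τ ∈ closedFD) :
    -Real.log ‖modularDelta τ‖ >
      Real.log (max 1 ‖modularJ τ‖) - 29.25 := by
  have h := log_max_one_div_add_log_lt (norm_nonneg _) (by norm_num)
    (norm_two_pi_pow_twelve_mul_eisensteinE4_pow_three_lt_of_mem_closedFD hτ)
    (norm_modularDelta_lt_of_mem_closedFD hτ)
  rw [modularJ, norm_div]
  linarith
end

section
/- Let 0 < q < 1 and 0 < t < 1. Then ∑_{n≥1} log|(1−(−qt)^n)/(1−(−q)^n)| ≤ −q(1−t)/(1+q) − q³(1−t³)/(1+q³) − 1/((1−q²)(1−q²t²)) + 1/(1−q²)². -/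
/-!
Since `log u ≤ u - 1`, the `n`-th term is at most `(x - y) / (1 - x)` with `x = (-q)^n`,
`y = (-qt)^n`. For odd `n` the term itself is `≤ 0`, and all odd terms but `n = 1, 3` are dropped.
For even `n = 2k` the bound is at most `(q^{2k} - (qt)^{2k}) / (1 - q²)`, whose sum is the
difference of two geometric series.
-/

open Real Finset

lemma one_sub_abs_le_one_sub_pow_succ {r : ℝ} (hr : |r| ≤ 1) (n : ℕ) :
    1 - |r| ≤ 1 - r ^ (n + 1) := by
  have : r ^ (n + 1) ≤ |r| :=
    calc r ^ (n + 1) ≤ |r| ^ (n + 1) := abs_pow r (n + 1) ▸ le_abs_self _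
      _ ≤ |r| := pow_le_of_le_one (abs_nonneg r) hr n.succ_ne_zero
  linarith

lemma one_sub_pow_succ_pos {r : ℝ} (hr : |r| < 1) (n : ℕ) : 0 < 1 - r ^ (n + 1) :=
  (sub_pos.2 hr).trans_le (one_sub_abs_le_one_sub_pow_succ hr.le n)

lemma summable_log_one_sub_pow_succ {r : ℝ} (hr : |r| < 1) :
    Summable fun n : ℕ => log (1 - r ^ (n + 1)) := by
  simpa [sub_eq_add_neg, pow_succ'] using
    Real.summable_log_one_add_of_summable ((summable_geometric_of_abs_lt_one hr).mul_left (-r))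

lemma summable_log_abs_one_sub_pow_succ_div {a b : ℝ} (ha : |a| < 1) (hb : |b| < 1) :
    Summable fun n : ℕ => log |(1 - b ^ (n + 1)) / (1 - a ^ (n + 1))| := by
  refine ((summable_log_one_sub_pow_succ hb).sub (summable_log_one_sub_pow_succ ha)).congr
    fun n => ?_
  rw [log_abs, log_div (one_sub_pow_succ_pos hb n).ne' (one_sub_pow_succ_pos ha n).ne']

lemma log_abs_one_sub_div_one_sub_le {x y : ℝ} (hx : x < 1) (hy : y < 1) :
    log |(1 - y) / (1 - x)| ≤ (x - y) / (1 - x) := by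
  have hx' : 0 < 1 - x := sub_pos.2 hx
  calc log |(1 - y) / (1 - x)| = log ((1 - y) / (1 - x)) := log_abs _
    _ ≤ (1 - y) / (1 - x) - 1 := log_le_sub_one_of_pos (div_pos (sub_pos.2 hy) hx')
    _ = (x - y) / (1 - x) := by field_simp; ring

lemma log_abs_one_sub_div_one_sub_nonpos {x y : ℝ} (hy : y < 1) (hxy : x ≤ y) :
    log |(1 - y) / (1 - x)| ≤ 0 := by
  rw [log_abs]
  exact log_nonpos (div_nonneg (by linarith) (by linarith))
    (div_le_one_of_le₀ (by linarith) (by linarith))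

lemma log_abs_one_sub_pow_succ_div_le {x y : ℝ} (hy0 : 0 ≤ y) (hyx : y ≤ x) (hx1 : x < 1)
    (k : ℕ) :
    log |(1 - y ^ (k + 1)) / (1 - x ^ (k + 1))| ≤ (x ^ (k + 1) - y ^ (k + 1)) / (1 - x) := by
  have hx0 : 0 ≤ x := hy0.trans hyx
  have hxk : |x| < 1 := by rwa [abs_of_nonneg hx0]
  have hyk : |y| < 1 := by rw [abs_of_nonneg hy0]; linarith
  refine (log_abs_one_sub_div_one_sub_le (sub_pos.1 (one_sub_pow_succ_pos hxk k))
    (sub_pos.1 (one_sub_pow_succ_pos hyk k))).trans ?_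
  refine div_le_div_of_nonneg_left (sub_nonneg.2 (pow_le_pow_left₀ hy0 hyx _)) (by linarith) ?_
  simpa [abs_of_nonneg hx0] using one_sub_abs_le_one_sub_pow_succ hxk.le k

lemma pow_le_mul_pow_of_nonpos_of_odd {a t : ℝ} (ha : a ≤ 0) (ht0 : 0 ≤ t) (ht1 : t ≤ 1)
    {n : ℕ} (hn : Odd n) : a ^ n ≤ (a * t) ^ n := by
  rw [mul_pow]
  nlinarith [hn.pow_nonpos ha, pow_le_one₀ ht0 ht1 (n := n)]

lemma hasSum_pow_succ_sub_pow_succ {x y : ℝ} (hx0 : 0 ≤ x) (hx1 : x < 1) (hy0 : 0 ≤ y)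
    (hy1 : y < 1) :
    HasSum (fun k : ℕ => x ^ (k + 1) - y ^ (k + 1)) (x / (1 - x) - y / (1 - y)) := by
  simpa [pow_succ', div_eq_mul_inv] using
    ((hasSum_geometric_of_lt_one hx0 hx1).mul_left x).sub
      ((hasSum_geometric_of_lt_one hy0 hy1).mul_left y)

lemma tsum_le_sum_range_of_nonpos {f : ℕ → ℝ} (hf : Summable f) {m : ℕ}
    (h : ∀ n, f (n + m) ≤ 0) : ∑' n, f n ≤ ∑ n ∈ range m, f n := by
  rw [← hf.sum_add_tsum_nat_add m]
  exact add_le_of_nonpos_right (tsum_nonpos h)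

/-- The term of index `n + 1` of the series; the paper's odd terms are `logRatio q t (2 * k)`. -/
noncomputable def logRatio (q t : ℝ) (n : ℕ) : ℝ :=
  log |(1 - (-(q * t)) ^ (n + 1)) / (1 - (-q) ^ (n + 1))|

section LogRatio

variable {q t : ℝ}

lemma abs_neg_mul_lt_one (hq0 : 0 ≤ q) (hq1 : q < 1) (ht0 : 0 ≤ t) (ht1 : t ≤ 1) :
    |-(q * t)| < 1 := by
  rw [abs_neg, abs_of_nonneg (mul_nonneg hq0 ht0)]
  nlinarith

lemma summable_logRatio (hq0 : 0 ≤ q) (hq1 : q < 1) (ht0 : 0 ≤ t) (ht1 : t ≤ 1) :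
    Summable (logRatio q t) :=
  summable_log_abs_one_sub_pow_succ_div (by rwa [abs_neg, abs_of_nonneg hq0])
    (abs_neg_mul_lt_one hq0 hq1 ht0 ht1)

lemma logRatio_le (hq0 : 0 ≤ q) (hq1 : q < 1) (ht0 : 0 ≤ t) (ht1 : t ≤ 1) (n : ℕ) :
    logRatio q t n ≤ ((-q) ^ (n + 1) - (-(q * t)) ^ (n + 1)) / (1 - (-q) ^ (n + 1)) :=
  log_abs_one_sub_div_one_sub_le
    (sub_pos.1 (one_sub_pow_succ_pos (by rwa [abs_neg, abs_of_nonneg hq0]) n))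
    (sub_pos.1 (one_sub_pow_succ_pos (abs_neg_mul_lt_one hq0 hq1 ht0 ht1) n))

lemma logRatio_two_mul_nonpos (hq0 : 0 ≤ q) (ht0 : 0 ≤ t) (ht1 : t ≤ 1) (k : ℕ) :
    logRatio q t (2 * k) ≤ 0 := by
  have hodd := odd_two_mul_add_one k
  refine log_abs_one_sub_div_one_sub_nonpos ?_ ?_
  · linarith [hodd.pow_nonpos (neg_nonpos.2 (mul_nonneg hq0 ht0))]
  · rw [← neg_mul]
    exact pow_le_mul_pow_of_nonpos_of_odd (neg_nonpos.2 hq0) ht0 ht1 hodd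

lemma tsum_logRatio_two_mul_le (hq0 : 0 ≤ q) (hq1 : q < 1) (ht0 : 0 ≤ t) (ht1 : t ≤ 1) :
    ∑' k, logRatio q t (2 * k) ≤
      -(q * (1 - t)) / (1 + q) - q ^ 3 * (1 - t ^ 3) / (1 + q ^ 3) :=
  calc ∑' k, logRatio q t (2 * k) ≤ ∑ k ∈ range 2, logRatio q t (2 * k) :=
        tsum_le_sum_range_of_nonpos
          ((summable_logRatio hq0 hq1 ht0 ht1).comp_injective
            (mul_right_injective₀ two_ne_zero))
          fun k => logRatio_two_mul_nonpos hq0 ht0 ht1 _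
    _ = logRatio q t 0 + logRatio q t 2 := by simp [sum_range_succ]
    _ ≤ _ := by
      refine (add_le_add (logRatio_le hq0 hq1 ht0 ht1 0)
        (logRatio_le hq0 hq1 ht0 ht1 2)).trans_eq ?_
      ring

lemma tsum_logRatio_two_mul_add_one_le (hq0 : 0 ≤ q) (hq1 : q < 1) (ht0 : 0 ≤ t)
    (ht1 : t ≤ 1) :
    ∑' k, logRatio q t (2 * k + 1) ≤
      (q ^ 2 / (1 - q ^ 2) - (q * t) ^ 2 / (1 - (q * t) ^ 2)) / (1 - q ^ 2) := by
  have hsq (r : ℝ) (k : ℕ) : (-r) ^ (2 * k + 1 + 1) = (r ^ 2) ^ (k + 1) := by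
    rw [show 2 * k + 1 + 1 = 2 * (k + 1) by ring, pow_mul, neg_sq]
  have hqt : q * t ≤ q := mul_le_of_le_one_right hq0 ht1
  have hq2 : q ^ 2 < 1 := by nlinarith
  have hqt2 : (q * t) ^ 2 ≤ q ^ 2 := pow_le_pow_left₀ (mul_nonneg hq0 ht0) hqt 2
  refine hasSum_le (fun k => ?_)
    ((summable_logRatio hq0 hq1 ht0 ht1).comp_injective fun a b h => by omega).hasSum
    ((hasSum_pow_succ_sub_pow_succ (sq_nonneg q) hq2 (sq_nonneg (q * t))
      (hqt2.trans_lt hq2)).div_const (1 - q ^ 2))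
  change log |(1 - (-(q * t)) ^ (2 * k + 1 + 1)) / (1 - (-q) ^ (2 * k + 1 + 1))| ≤ _
  rw [hsq, hsq]
  exact log_abs_one_sub_pow_succ_div_le (sq_nonneg _)
    hqt2 hq2 k

end LogRatio

theorem tsum_log_ratio_bound {q t : ℝ} (hq0 : 0 < q) (hq1 : q < 1) (ht0 : 0 < t)
    (ht1 : t < 1) :
    (∑' n : ℕ, Real.log (|(1 - (-(q * t)) ^ (n + 1)) / (1 - (-q) ^ (n + 1))|)) ≤
      -(q * (1 - t)) / (1 + q) - q ^ 3 * (1 - t ^ 3) / (1 + q ^ 3)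
        - 1 / ((1 - q ^ 2) * (1 - q ^ 2 * t ^ 2)) + 1 / (1 - q ^ 2) ^ 2 := by
  have hsum := summable_logRatio hq0.le hq1 ht0.le ht1.le
  have hq2 : 1 - q ^ 2 ≠ 0 := by nlinarith
  have hqt2 : 1 - q ^ 2 * t ^ 2 ≠ 0 := by nlinarith [mul_pos hq0 ht0, mul_lt_mul'' hq1 ht1 hq0.le ht0.le]
  calc ∑' n, logRatio q t n
      = ∑' k, logRatio q t (2 * k) + ∑' k, logRatio q t (2 * k + 1) :=
        (tsum_even_add_odd (hsum.comp_injective (mul_right_injective₀ two_ne_zero))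
          (hsum.comp_injective fun a b h => by omega)).symm
    _ ≤ (-(q * (1 - t)) / (1 + q) - q ^ 3 * (1 - t ^ 3) / (1 + q ^ 3)) +
          (q ^ 2 / (1 - q ^ 2) - (q * t) ^ 2 / (1 - (q * t) ^ 2)) / (1 - q ^ 2) :=
        add_le_add (tsum_logRatio_two_mul_le hq0.le hq1 ht0.le ht1.le)
          (tsum_logRatio_two_mul_add_one_le hq0.le hq1 ht0.le ht1.le)
    _ = _ := by
      field_simp
      ring
end

section
/- Let n ≥ 1 and p a prime with p ≡ (−1)^n (mod 9). Then there exists a monic polynomial f ∈ ℤ[X] of degree n of the form f(X) = (X−1)^n + ∑_{k=1}^n 9^k b_k (X−1)^{n−k} with integers b_k, such that f(0) = p and f is Eisenstein at p (i.e., all non-leading coefficients of f in the standard basis are divisible by p, and the constant term f(0) = p is not divisible by p²). -/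
/-!
With `t = -(-1)ⁿ p` we have `p ∣ t` and `t ≡ -1 (mod 9)`. Expanding
`(X + t)ⁿ = ((X - 1) + (t + 1))ⁿ` binomially gives the required shape with `bₖ = sᵏ (n choose k)`,
`9 s = t + 1`, and this polynomial is `Xⁿ` modulo `p`. Adding `c (X - 1)ⁿ⁻¹` with
`c = ± (p - tⁿ)` fixes the constant term to `p`; `c` is divisible by `9` because
`tⁿ ≡ (-1)ⁿ ≡ p (mod 9)`, and by `p` because `p ∣ t`, so the reduction modulo `p` is still `Xⁿ`.
-/

open Polynomial

theorem Prime.notMem_span_singleton_self_sq {R : Type*} [CommRing R] [IsDomain R] {p : R}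
    (hp : Prime p) : p ∉ Ideal.span {p} ^ 2 := by
  rw [Ideal.span_singleton_pow, Ideal.mem_span_singleton, sq]
  intro h
  exact hp.not_isUnit (isUnit_of_dvd_one ((mul_dvd_mul_iff_left hp.ne_zero).1 (by rwa [mul_one])))

theorem Polynomial.Monic.isEisensteinAt_of_map_eq_X_pow {R : Type*} [CommRing R] {P : Ideal R}
    {f : R[X]} (hf : f.Monic) (hP : P ≠ ⊤)
    (hmap : f.map (Ideal.Quotient.mk P) = X ^ f.natDegree) (h0 : f.coeff 0 ∉ P ^ 2) :
    f.IsEisensteinAt P := by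
  refine hf.isEisensteinAt_of_mem_of_notMem hP (fun {k} hk => ?_) h0
  rw [← Ideal.Quotient.eq_zero_iff_mem, ← coeff_map, hmap, coeff_X_pow, if_neg hk.ne]

theorem Polynomial.add_C_mul_pow_add_C_mul_eq_sum {R : Type*} [CommSemiring R] (x : R[X])
    (a s e : R) {n : ℕ} (hn : 1 ≤ n) :
    (x + C (a * s)) ^ n + C (a * e) * x ^ (n - 1) =
      x ^ n + ∑ k ∈ Finset.Icc 1 n, C (a ^ k * (s ^ k * n.choose k + if k = 1 then e else 0)) *
        x ^ (n - k) := by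
  have hexp : (x + C (a * s)) ^ n =
      x ^ n + ∑ k ∈ Finset.Icc 1 n, C (a ^ k * (s ^ k * n.choose k)) * x ^ (n - k) := by
    rw [add_comm, add_pow, Nat.range_succ_eq_Icc_zero,
      ← Finset.insert_Icc_add_one_left_eq_Icc n.zero_le, Finset.sum_insert (by simp)]
    congr 1
    · simp
    · refine Finset.sum_congr rfl fun k _ => ?_
      simp only [map_mul, map_pow, map_natCast]
      ring
  have hcorr : ∑ k ∈ Finset.Icc 1 n, C (a ^ k * if k = 1 then e else 0) * x ^ (n - k) =
      C (a * e) * x ^ (n - 1) := by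
    rw [Finset.sum_eq_single_of_mem 1 (Finset.mem_Icc.2 ⟨le_rfl, hn⟩)]
    · simp
    · intro k _ hk
      simp [hk]
  simp only [mul_add, map_add, add_mul, Finset.sum_add_distrib, hexp, hcorr, add_assoc]

section

variable {R : Type*} [CommRing R] {n : ℕ} (t c : R)

theorem Polynomial.monic_X_add_C_pow_add_C_mul_X_sub_one_pow (hn : 1 ≤ n) :
    ((X + C t) ^ n + C c * (X - 1) ^ (n - 1)).Monic := by
  monicity!
  omega

theorem Polynomial.natDegree_X_add_C_pow_add_C_mul_X_sub_one_pow [Nontrivial R] (hn : 1 ≤ n) :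
    ((X + C t) ^ n + C c * (X - 1) ^ (n - 1)).natDegree = n := by
  compute_degree!
  simp [show n ≠ n - 1 by omega]

theorem Polynomial.isEisensteinAt_X_add_C_pow_add_C_mul_X_sub_one_pow [Nontrivial R]
    {P : Ideal R} (hP : P ≠ ⊤) (hn : 1 ≤ n) (ht : t ∈ P) (hc : c ∈ P)
    (h0 : ((X + C t) ^ n + C c * (X - 1) ^ (n - 1)).eval 0 ∉ P ^ 2) :
    ((X + C t) ^ n + C c * (X - 1) ^ (n - 1)).IsEisensteinAt P := by
  refine (monic_X_add_C_pow_add_C_mul_X_sub_one_pow t c hn).isEisensteinAt_of_map_eq_X_pow hP ?_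
    (by rwa [coeff_zero_eq_eval_zero])
  simp only [natDegree_X_add_C_pow_add_C_mul_X_sub_one_pow t c hn, Polynomial.map_add,
    Polynomial.map_pow, Polynomial.map_mul, map_X, map_C, Ideal.Quotient.eq_zero_iff_mem.2 ht,
    Ideal.Quotient.eq_zero_iff_mem.2 hc, map_zero, add_zero, zero_mul]

end

theorem exists_eisenstein_poly_special_form {n : ℕ} (hn : 1 ≤ n) {p : ℕ} (hp : p.Prime)
    (hcong : (p : ℤ) ≡ (-1) ^ n [ZMOD 9]) :
    ∃ (b : ℕ → ℤ) (f : ℤ[X]),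
      f = (X - 1) ^ n + ∑ k ∈ Finset.Icc 1 n, C (9 ^ k * b k) * (X - 1) ^ (n - k) ∧
      f.Monic ∧ f.natDegree = n ∧ f.eval 0 = (p : ℤ) ∧
      f.IsEisensteinAt (Ideal.span {(p : ℤ)}) := by
  have hsq (k : ℕ) : (-1 : ℤ) ^ k * (-1) ^ k = 1 := by
    rw [← mul_pow, neg_one_mul, neg_neg, one_pow]
  set t : ℤ := -((-1) ^ n * p)
  have ht : t ≡ -1 [ZMOD 9] := by
    have := (hcong.mul_left ((-1) ^ n)).neg
    rwa [hsq] at this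
  obtain ⟨s, hs⟩ : (9 : ℤ) ∣ t - -1 := ht.symm.dvd
  obtain ⟨c, hc⟩ : (9 : ℤ) ∣ p - t ^ n := ((ht.pow n).trans hcong.symm).dvd
  have hpt : (p : ℤ) ∣ t := (dvd_mul_left _ _).neg_right
  have hpc : (p : ℤ) ∣ 9 * ((-1) ^ (n - 1) * c) := by
    rw [mul_left_comm, ← hc]
    exact (dvd_sub dvd_rfl (hpt.pow (by omega))).mul_left _
  set f : ℤ[X] := (X + C t) ^ n + C (9 * ((-1) ^ (n - 1) * c)) * (X - 1) ^ (n - 1) with hf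
  have heval : f.eval 0 = p := by
    simp only [f, eval_add, eval_pow, eval_X, eval_C, eval_mul, eval_sub, eval_one, zero_add,
      zero_sub]
    linear_combination -hc + 9 * c * hsq (n - 1)
  refine ⟨fun k => s ^ k * n.choose k + if k = 1 then (-1) ^ (n - 1) * c else 0, f, ?_,
    monic_X_add_C_pow_add_C_mul_X_sub_one_pow _ _ hn,
    natDegree_X_add_C_pow_add_C_mul_X_sub_one_pow _ _ hn, heval, ?_⟩
  · rw [← add_C_mul_pow_add_C_mul_eq_sum _ _ _ _ hn, ← hs, hf, sub_neg_eq_add, map_add, map_one]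
    ring
  · have hpZ : Prime (p : ℤ) := Nat.prime_iff_prime_int.mp hp
    refine isEisensteinAt_X_add_C_pow_add_C_mul_X_sub_one_pow _ _
      (Ideal.span_singleton_ne_top hpZ.not_isUnit) hn (Ideal.mem_span_singleton.2 hpt)
      (Ideal.mem_span_singleton.2 hpc) ?_
    rw [← hf, heval]
    exact hpZ.notMem_span_singleton_self_sq
end
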